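/- For a right triangle with legs a = sin(t), b = cos(t), t ∈ (0, π/2), and hypotenuse c = 1, the function g(t) = ((1/2)√(4cos²t + sin²t) + (1/2)√(4sin²t + cos²t))/(1 + sin t + cos t) attains its minimum √((5/2)(3−2√2)) at t = π/4 and has supremum 3/4 as t → 0⁺ or t → π/2⁻. -/
import Mathlib

open Real Filter

noncomputable def g15 (t : ℝ) : ℝ :=
  ((1/2) * Real.sqrt (4 * (Real.cos t)^2 + (Real.sin t)^2) +
    (1/2) * Real.sqrt (4 * (Real.sin t)^2 + (Real.cos t)^2)) /
    (1 + Real.sin t + Real.cos t)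

lemma key_upper15 (u r : ℝ) (hu1 : 1 < u) (hur : u ≤ r) (hr2 : r^2 = 2) :
    9*(u^2-1)^2 + 16 < ((9/4)*(1+u)^2 - 5)^2 := by
  have hr15 : r ≤ 1.5 := by nlinarith
  have hQ : (0:ℝ) < 279 + 675*u + 261*u^2 - 63*u^3 := by nlinarith
  nlinarith [mul_pos (sub_pos.2 hu1) hQ]

lemma key_lower15 (u r : ℝ) (hu1 : 1 ≤ u) (hur : u ≤ r) (hr2 : r^2 = 2) :
    (10*(3-2*r)*(1+u)^2 - 5)^2 ≤ 9*(u^2-1)^2 + 16 := by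
  have hr14 : 1.4 ≤ r := by nlinarith [sq_nonneg (r-1.4), sq_nonneg (r+1.4)]
  have hr15 : r ≤ 1.4143 := by nlinarith
  have hu2 : u^2 ≤ 2 := by nlinarith
  have hQ : (0:ℝ) ≤ (1000-700*r) + (3700-2600*r)*u + (4400-3109*r)*u^2 + (1691-1200*r)*u^3 := by
    nlinarith [mul_nonneg (by linarith : (0:ℝ) ≤ u) (by linarith : (0:ℝ) ≤ 2 - u^2),
      mul_nonneg (by linarith : (0:ℝ) ≤ u - 1) (by linarith : (0:ℝ) ≤ 2 - u^2)]
  have h0 : r^2 - 2 = 0 := by rw [hr2]; ring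
  have hid : 9*(u^2-1)^2 + 16 - (10*(3-2*r)*(1+u)^2 - 5)^2 =
      (r-u) * ((1000-700*r) + (3700-2600*r)*u + (4400-3109*r)*u^2 + (1691-1200*r)*u^3)
      + (300 + 1000*u + 709*u^2 - 400*u^3 - 400*u^4) * (r^2-2) := by ring
  rw [h0, mul_zero, add_zero] at hid
  nlinarith [mul_nonneg (sub_nonneg.2 hur) hQ]

set_option maxHeartbeats 1000000 in
lemma g15_bounds (s c : ℝ) (hs : 0 < s) (hc : 0 < c) (h1 : s^2 + c^2 = 1) :
    Real.sqrt ((5/2) * (3 - 2 * Real.sqrt 2)) ≤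
      ((1/2) * Real.sqrt (4*c^2 + s^2) + (1/2) * Real.sqrt (4*s^2 + c^2)) / (1 + s + c) ∧
    ((1/2) * Real.sqrt (4*c^2 + s^2) + (1/2) * Real.sqrt (4*s^2 + c^2)) / (1 + s + c) < 3/4 := by
  obtain ⟨r, hrdef⟩ : ∃ r, r = Real.sqrt 2 := ⟨_, rfl⟩
  have hr2 : r^2 = 2 := by rw [hrdef]; exact Real.sq_sqrt (by norm_num)
  have hr0 : 0 ≤ r := hrdef ▸ Real.sqrt_nonneg 2
  obtain ⟨A, hAdef⟩ : ∃ A, A = Real.sqrt (4*c^2 + s^2) := ⟨_, rfl⟩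
  obtain ⟨B, hBdef⟩ : ∃ B, B = Real.sqrt (4*s^2 + c^2) := ⟨_, rfl⟩
  have hA0 : 0 ≤ A := hAdef ▸ Real.sqrt_nonneg _
  have hB0 : 0 ≤ B := hBdef ▸ Real.sqrt_nonneg _
  have hA2 : A^2 = 4*c^2 + s^2 := by rw [hAdef]; exact Real.sq_sqrt (by positivity)
  have hB2 : B^2 = 4*s^2 + c^2 := by rw [hBdef]; exact Real.sq_sqrt (by positivity)
  obtain ⟨u, hudef⟩ : ∃ u, u = s + c := ⟨_, rfl⟩
  have hu1 : 1 < u := by rw [hudef]; nlinarith [mul_pos hs hc]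
  have hur : u ≤ r := by rw [hudef]; nlinarith [sq_nonneg (s - c), mul_pos hs hc]
  have hden : (0:ℝ) < 1 + u := by linarith
  have hdeneq : (1:ℝ) + s + c = 1 + u := by rw [hudef]; ring
  have hAB2 : (2*(A*B))^2 = 9*(u^2-1)^2 + 16 := by
    have h : (2*(A*B))^2 = 4*(A^2 * B^2) := by ring
    rw [h, hA2, hB2, hudef]
    linear_combination (7*s^2 - 36*s*c + 7*c^2 + 25) * h1
  have hAB0 : 0 ≤ 2*(A*B) := by positivity
  have hsumsq : (A+B)^2 = 5 + 2*(A*B) := by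
    have h : (A+B)^2 = A^2 + B^2 + 2*(A*B) := by ring
    rw [h, hA2, hB2]; linarith
  have hsum0 : 0 ≤ A + B := by linarith
  rw [hdeneq]
  constructor
  · -- lower bound
    obtain ⟨m, hmdef⟩ : ∃ m, m = Real.sqrt ((5/2) * (3 - 2 * Real.sqrt 2)) := ⟨_, rfl⟩
    have hrle : r ≤ 1.5 := by nlinarith
    have hm0 : 0 ≤ m := hmdef ▸ Real.sqrt_nonneg _
    have hm2 : m^2 = (5/2) * (3 - 2*r) := by
      rw [hmdef, ← hrdef]; exact Real.sq_sqrt (by nlinarith)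
    have hL : 10*(3-2*r)*(1+u)^2 - 5 ≤ 2*(A*B) := by
      apply le_of_pow_le_pow_left₀ two_ne_zero hAB0
      rw [hAB2]
      exact key_lower15 u r hu1.le hur hr2
    have hsq : (2*m*(1+u))^2 ≤ (A+B)^2 := by
      have h : (2*m*(1+u))^2 = 4*m^2*(1+u)^2 := by ring
      rw [h, hm2, hsumsq]; nlinarith
    have hfin : 2*m*(1+u) ≤ A + B := le_of_pow_le_pow_left₀ two_ne_zero hsum0 hsq
    rw [← hmdef, ← hAdef, ← hBdef, le_div_iff₀ hden]
    linarith
  · -- upper bound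
    have hR0 : (0:ℝ) < (9/4)*(1+u)^2 - 5 := by nlinarith
    have hABlt : 2*(A*B) < (9/4)*(1+u)^2 - 5 := by
      apply lt_of_pow_lt_pow_left₀ 2 hR0.le
      rw [hAB2]
      exact key_upper15 u r hu1 hur hr2
    have hsum : A + B < (3/2)*(1+u) := by
      apply lt_of_pow_lt_pow_left₀ 2 (by positivity)
      rw [hsumsq]; nlinarith
    rw [← hAdef, ← hBdef, div_lt_iff₀ hden]
    linarith

lemma g15_pi4 : g15 (Real.pi/4) = Real.sqrt ((5/2) * (3 - 2 * Real.sqrt 2)) := by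
  have hr2 : Real.sqrt 2 ^ 2 = 2 := Real.sq_sqrt (by norm_num)
  have hr0 : 0 ≤ Real.sqrt 2 := Real.sqrt_nonneg 2
  have hr1 : 1 ≤ Real.sqrt 2 := by nlinarith
  have harg : 4 * (Real.sqrt 2 / 2)^2 + (Real.sqrt 2 / 2)^2 = 5/2 := by nlinarith
  rw [g15, Real.sin_pi_div_four, Real.cos_pi_div_four, harg]
  have h32 : (3 : ℝ) - 2 * Real.sqrt 2 = (Real.sqrt 2 - 1)^2 := by nlinarith
  have hrhs : Real.sqrt ((5/2) * (3 - 2 * Real.sqrt 2)) = Real.sqrt (5/2) * (Real.sqrt 2 - 1) := by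
    rw [h32, Real.sqrt_mul (by norm_num : (0:ℝ) ≤ 5/2), Real.sqrt_sq (by linarith)]
  rw [hrhs, div_eq_iff (by positivity : (1:ℝ) + Real.sqrt 2 / 2 + Real.sqrt 2 / 2 ≠ 0)]
  linear_combination (- Real.sqrt (5/2)) * hr2

lemma g15_cont (x : ℝ) (hx : (1 : ℝ) + Real.sin x + Real.cos x ≠ 0) : ContinuousAt g15 x := by
  apply ContinuousAt.div
  · exact (((continuous_const.mul (((continuous_const.mul (Real.continuous_cos.pow 2)).add
      (Real.continuous_sin.pow 2)).sqrt)).add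
      (continuous_const.mul (((continuous_const.mul (Real.continuous_sin.pow 2)).add
      (Real.continuous_cos.pow 2)).sqrt)))).continuousAt
  · exact ((continuous_const.add Real.continuous_sin).add Real.continuous_cos).continuousAt
  · exact hx

lemma g15_zero : g15 0 = 3/4 := by
  have h4 : Real.sqrt 4 = 2 := by
    rw [show (4:ℝ) = 2^2 by norm_num, Real.sqrt_sq (by norm_num : (0:ℝ) ≤ 2)]
  simp [g15, Real.sin_zero, Real.cos_zero]
  norm_num [h4]

lemma g15_pi2 : g15 (Real.pi/2) = 3/4 := by
  have h4 : Real.sqrt 4 = 2 := by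
    rw [show (4:ℝ) = 2^2 by norm_num, Real.sqrt_sq (by norm_num : (0:ℝ) ≤ 2)]
  simp [g15, Real.sin_pi_div_two, Real.cos_pi_div_two]
  norm_num [h4]

theorem stmt_15 :
    (∀ t ∈ Set.Ioo (0 : ℝ) (Real.pi/2),
        Real.sqrt ((5/2) * (3 - 2 * Real.sqrt 2)) ≤ g15 t) ∧
    g15 (Real.pi/4) = Real.sqrt ((5/2) * (3 - 2 * Real.sqrt 2)) ∧
    (∀ t ∈ Set.Ioo (0 : ℝ) (Real.pi/2), g15 t < 3/4) ∧
    Filter.Tendsto g15 (nhdsWithin 0 (Set.Ioi 0)) (nhds (3/4)) ∧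
    Filter.Tendsto g15 (nhdsWithin (Real.pi/2) (Set.Iio (Real.pi/2))) (nhds (3/4)) := by
  have hb : ∀ t ∈ Set.Ioo (0 : ℝ) (Real.pi/2),
      Real.sqrt ((5/2) * (3 - 2 * Real.sqrt 2)) ≤ g15 t ∧ g15 t < 3/4 := by
    rintro t ⟨ht0, ht1⟩
    have hs : 0 < Real.sin t :=
      Real.sin_pos_of_pos_of_lt_pi ht0 (lt_of_lt_of_le ht1 (by linarith [Real.pi_pos]))
    have hc : 0 < Real.cos t := Real.cos_pos_of_mem_Ioo
      ⟨by linarith [Real.pi_pos], ht1⟩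
    have h1 : (Real.sin t)^2 + (Real.cos t)^2 = 1 := Real.sin_sq_add_cos_sq t
    exact g15_bounds (Real.sin t) (Real.cos t) hs hc h1
  refine ⟨fun t ht => (hb t ht).1, g15_pi4, fun t ht => (hb t ht).2, ?_, ?_⟩
  · have := (g15_cont 0 (by norm_num)).continuousWithinAt (s := Set.Ioi 0)
    rw [ContinuousWithinAt, g15_zero] at this
    exact this
  · have := (g15_cont (Real.pi/2) (by norm_num)).continuousWithinAt (s := Set.Iio (Real.pi/2))
    rw [ContinuousWithinAt, g15_pi2] at this
    exact this
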